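/- Let X be a Banach space with X** = J_X(X) ⊕ F, F finite-dimensional, with continuous projection P onto J_X(X). If a net (F_α) in the unit ball of X** converges weakly to J_X(x) for some x ∈ X, and x is a point of weak-to-norm continuity of the unit ball of X, then F_α → J_X(x) in norm. -/

import Mathlib

open NormedSpace Filter Topology
open scoped ENNReal

noncomputable section

/-- The annihilator of a subspace `Y ⊆ X` inside the continuous dual of `X`. -/
def annih {X : Type*} [SeminormedAddCommGroup X] [NormedSpace ℝ X] (Y : Submodule ℝ X) :
    Submodule ℝ (StrongDual ℝ X) where
  carrier := {f | ∀ y ∈ Y, f y = 0}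
  add_mem' := by
    intro a b ha hb y hy
    simp [ContinuousLinearMap.add_apply, ha y hy, hb y hy]
  zero_mem' := by intro y hy; rfl
  smul_mem' := by
    intro c f hf y hy
    simp [hf y hy]

/-- A Banach space is reflexive iff the canonical embedding into its bidual is surjective. -/
def BReflexive (X : Type*) [SeminormedAddCommGroup X] [NormedSpace ℝ X] : Prop :=
  Function.Surjective (inclusionInDoubleDual ℝ X)

/-- A Banach space is coreflexive iff `X**/J_X(X)` is reflexive. -/
def Coreflexive (X : Type*) [SeminormedAddCommGroup X] [NormedSpace ℝ X] : Prop :=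
  @BReflexive ((StrongDual ℝ (StrongDual ℝ X)) ⧸ LinearMap.range (inclusionInDoubleDual ℝ X).toLinearMap)
    (Submodule.Quotient.seminormedAddCommGroup (M := StrongDual ℝ (StrongDual ℝ X)) _)
    (Submodule.Quotient.normedSpace (M := StrongDual ℝ (StrongDual ℝ X)) _ ℝ)

/-- The adjoint of a continuous linear map between normed spaces. -/
def adj {E F : Type*} [SeminormedAddCommGroup E] [NormedSpace ℝ E]
    [SeminormedAddCommGroup F] [NormedSpace ℝ F] (f : E →L[ℝ] F) :
    StrongDual ℝ F →L[ℝ] StrongDual ℝ E :=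
  (ContinuousLinearMap.compL ℝ E F ℝ).flip f

/-- `X` is weak*-sequentially dense in its bidual. -/
def WStarSeqDense (X : Type*) [SeminormedAddCommGroup X] [NormedSpace ℝ X] : Prop :=
  ∀ F : StrongDual ℝ (StrongDual ℝ X), ∃ x : ℕ → X, ∀ f : StrongDual ℝ X,
    Tendsto (fun n => inclusionInDoubleDual ℝ X (x n) f) atTop (𝓝 (F f))

/-- `x` is a point of weak-to-norm continuity of the closed unit ball of `X`. -/
def wPC (X : Type*) [SeminormedAddCommGroup X] [NormedSpace ℝ X] (x : X) : Prop :=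
  ∀ l : Filter X, (∀ᶠ y in l, ‖y‖ ≤ 1) →
    (∀ f : StrongDual ℝ X, Tendsto (fun y => f y) l (𝓝 (f x))) →
    Tendsto id l (𝓝 x)

/-! The projection splits `F = P F + (F - P F)`. The second summand lies in the finite-dimensional
space `ker P`, where weak and norm convergence coincide, so it tends to `0` in norm. The first is
`J (y F)` with `y F ∈ X` converging weakly to `x`; since `‖y F‖ ≤ ‖F‖ + ‖F - P F‖`, rescaling `y F`
by a factor tending to `1` puts it in the unit ball, and weak-to-norm continuity at `x` gives
`y F → x` in norm. -/

section

variable {α 𝕜 E : Type*} [RCLike 𝕜] [AddCommGroup E] [Module 𝕜 E] [TopologicalSpace E]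
  [IsTopologicalAddGroup E] [ContinuousSMul 𝕜 E] [PolynormableSpace 𝕜 E] [T2Space E]
  {l : Filter α}

theorem tendsto_zero_of_weak_of_mem_finiteDimensional (S : Submodule 𝕜 E) [FiniteDimensional 𝕜 S]
    {u : α → E} (hS : ∀ a, u a ∈ S)
    (hweak : ∀ g : StrongDual 𝕜 E, Tendsto (fun a => g (u a)) l (𝓝 0)) :
    Tendsto u l (𝓝 0) := by
  obtain ⟨π, hπ⟩ := Submodule.ClosedComplemented.of_finiteDimensional S
  let e := (Module.finBasis 𝕜 S).equivFunL
  have hcoord : Tendsto (fun a => e (π (u a))) l (𝓝 0) :=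
    tendsto_pi_nhds.2 fun i => by
      simpa using hweak ((ContinuousLinearMap.proj i).comp (e.toContinuousLinearMap.comp π))
  have hπu : ∀ a, (π (u a) : E) = u a := fun a => congrArg Subtype.val (hπ ⟨u a, hS a⟩)
  have := ((S.subtypeL.comp e.symm.toContinuousLinearMap).continuous.tendsto 0).comp hcoord
  simpa [Function.comp_def, hπu] using this

theorem tendsto_sub_apply_of_weak_of_finiteDimensional_ker {P : E →L[𝕜] E}
    (hP : IsIdempotentElem P) [FiniteDimensional 𝕜 (LinearMap.ker P.toLinearMap)]
    {u : α → E} {p : E} (hp : P p = p)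
    (hweak : ∀ g : StrongDual 𝕜 E, Tendsto (fun a => g (u a)) l (𝓝 (g p))) :
    Tendsto (fun a => u a - P (u a)) l (𝓝 0) := by
  refine tendsto_zero_of_weak_of_mem_finiteDimensional (LinearMap.ker P.toLinearMap)
    (fun a => ?_) fun g => ?_
  · have hPP : P (P (u a)) = P (u a) := DFunLike.congr_fun hP (u a)
    simp [LinearMap.mem_ker, hPP]
  · simpa [hp] using (hweak g).sub (hweak (g.comp P))

end

namespace wPC

variable {X α : Type*} [SeminormedAddCommGroup X] [NormedSpace ℝ X] {x : X} {l : Filter α}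
  {u : α → X}

theorem tendsto (hx : wPC X x) (hball : ∀ᶠ a in l, ‖u a‖ ≤ 1)
    (hweak : ∀ f : StrongDual ℝ X, Tendsto (fun a => f (u a)) l (𝓝 (f x))) :
    Tendsto u l (𝓝 x) :=
  hx (l.map u) hball hweak

theorem tendsto_of_norm_le_one_add (hx : wPC X x) (hnorm : ∀ ε > 0, ∀ᶠ a in l, ‖u a‖ ≤ 1 + ε)
    (hweak : ∀ f : StrongDual ℝ X, Tendsto (fun a => f (u a)) l (𝓝 (f x))) :
    Tendsto u l (𝓝 x) := by
  set c : α → ℝ := fun a => max 1 ‖u a‖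
  have hc_pos : ∀ a, 0 < c a := fun a => one_pos.trans_le (le_max_left _ _)
  have hc : Tendsto c l (𝓝 1) := by
    refine tendsto_order.2 ⟨fun b hb => .of_forall fun a => hb.trans_le (le_max_left _ _),
      fun b hb => ?_⟩
    filter_upwards [hnorm ((b - 1) / 2) (by linarith)] with a ha
    exact max_lt (by linarith) (by linarith)
  have hz : Tendsto (fun a => (c a)⁻¹ • u a) l (𝓝 x) := by
    refine hx.tendsto (.of_forall fun a => ?_) fun f => ?_
    · rw [norm_smul, norm_inv, Real.norm_of_nonneg (hc_pos a).le, inv_mul_le_one₀ (hc_pos a)]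
      exact le_max_right _ _
    · simpa using (hc.inv₀ one_ne_zero).mul (hweak f)
  simpa [smul_inv_smul₀ (hc_pos _).ne'] using hc.smul hz

end wPC

theorem stmt12_general (X : Type*) [NormedAddCommGroup X] [NormedSpace ℝ X]
    (P : StrongDual ℝ (StrongDual ℝ X) →L[ℝ] StrongDual ℝ (StrongDual ℝ X))
    (hPP : P.comp P = P)
    (hrange : LinearMap.range (P : StrongDual ℝ (StrongDual ℝ X) →ₗ[ℝ] StrongDual ℝ (StrongDual ℝ X)) = LinearMap.range (inclusionInDoubleDual ℝ X : X →ₗ[ℝ] StrongDual ℝ (StrongDual ℝ X)))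
    (hker : @FiniteDimensional ℝ ↥(LinearMap.ker P.toLinearMap) _
      (Submodule.addCommGroup (M := StrongDual ℝ (StrongDual ℝ X)) _) _)
    (x : X) (hxPC : wPC X x)
    (l : Filter (StrongDual ℝ (StrongDual ℝ X))) (hl : ∀ᶠ F in l, ‖F‖ ≤ 1)
    (hweak : ∀ g : StrongDual ℝ (StrongDual ℝ (StrongDual ℝ X)),
      Tendsto (fun F => g F) l (𝓝 (g (inclusionInDoubleDual ℝ X x)))) :
    Tendsto id l (𝓝 (inclusionInDoubleDual ℝ X x)) := by
  set J := inclusionInDoubleDual ℝ X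
  have hPJ : P (J x) = J x := by
    obtain ⟨F, hF⟩ : J x ∈ LinearMap.range P.toLinearMap := hrange ▸ ⟨x, rfl⟩
    rw [← hF]
    exact DFunLike.congr_fun hPP F
  have hidem : IsIdempotentElem P := by rw [IsIdempotentElem, ContinuousLinearMap.mul_def, hPP]
  -- Naming `E` lets the bidual's instances be synthesized; unifying them from `P` times out.
  have hQ : Tendsto (fun F => F - P F) l (𝓝 0) :=
    tendsto_sub_apply_of_weak_of_finiteDimensional_ker (E := StrongDual ℝ (StrongDual ℝ X))
      hidem hPJ hweak
  have hQn : Tendsto (fun F => ‖F - P F‖) l (𝓝 0) := by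
    simpa [norm_zero (E := StrongDual ℝ (StrongDual ℝ X))] using
      hQ.norm (E := StrongDual ℝ (StrongDual ℝ X))
  choose y hy using fun F =>
    show ∃ z, J z = P F from (hrange ▸ ⟨F, rfl⟩ : P F ∈ LinearMap.range J.toLinearMap)
  have hy_tendsto : Tendsto y l (𝓝 x) := by
    refine hxPC.tendsto_of_norm_le_one_add (fun ε hε => ?_) fun f => ?_
    · filter_upwards [hl, hQn.eventually_le_const hε] with F hF hQF
      calc ‖y F‖ = ‖F - (F - P F)‖ := by
            rw [sub_sub_cancel F (P F), ← (inclusionInDoubleDualLi ℝ).norm_map]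
            exact congrArg norm (hy F)
        _ ≤ 1 + ε := (norm_sub_le (E := StrongDual ℝ (StrongDual ℝ X)) _ _).trans (add_le_add hF hQF)
    · have h := hweak ((inclusionInDoubleDual ℝ _ f).comp P)
      rw [ContinuousLinearMap.comp_apply, hPJ] at h
      simpa [← hy, J] using h
  show Tendsto (fun F => F) l (𝓝 (J x))
  simpa [hy] using ((J.continuous.tendsto x).comp hy_tendsto).add hQ

theorem stmt12 (X : Type*) [NormedAddCommGroup X] [NormedSpace ℝ X] [CompleteSpace X]
    (P : StrongDual ℝ (StrongDual ℝ X) →L[ℝ] StrongDual ℝ (StrongDual ℝ X))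
    (hPP : P.comp P = P)
    (hrange : LinearMap.range (P : StrongDual ℝ (StrongDual ℝ X) →ₗ[ℝ] StrongDual ℝ (StrongDual ℝ X)) = LinearMap.range (inclusionInDoubleDual ℝ X : X →ₗ[ℝ] StrongDual ℝ (StrongDual ℝ X)))
    (hker : @FiniteDimensional ℝ ↥(LinearMap.ker P.toLinearMap) _
      (Submodule.addCommGroup (M := StrongDual ℝ (StrongDual ℝ X)) _) _)
    (x : X) (hx : ‖x‖ ≤ 1) (hxPC : wPC X x)
    (l : Filter (StrongDual ℝ (StrongDual ℝ X))) (hl : ∀ᶠ F in l, ‖F‖ ≤ 1)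
    (hweak : ∀ g : StrongDual ℝ (StrongDual ℝ (StrongDual ℝ X)),
      Tendsto (fun F => g F) l (𝓝 (g (inclusionInDoubleDual ℝ X x)))) :
    Tendsto id l (𝓝 (inclusionInDoubleDual ℝ X x)) :=
  stmt12_general X P hPP hrange hker x hxPC l hl hweak
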